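/- arXiv:2202.08634 — 5 statements merged into one kernel-verified Lean document; each statement's English description precedes it below -/
import Mathlib

section
/- Let X be a topological space, V a finite-dimensional real inner product space, and φ : X × V → [0,∞) such that for every x, φ(x,·) is a norm with (1/α)‖v‖ ≤ φ(x,v) ≤ α‖v‖. Define φ*(x,v) := sup { |⟨v,w⟩| / φ(x,w) : w ≠ 0 }. If φ is lower semicontinuous on X × V, then φ* is upper semicontinuous on X × V. -/
open Filter Topology Set Metric

/-!
Homogeneity reduces the supremum defining `φ*` to one over the unit sphere. There the quotient
`|⟪v, u⟫| / φ(x, u)` is upper semicontinuous in `((x, v), u)`, since its numerator is continuous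
and its denominator is lower semicontinuous and bounded away from zero. A supremum over a compact
parameter space of a jointly upper semicontinuous function is upper semicontinuous (tube lemma).
-/

theorem UpperSemicontinuous.iSup_of_compactSpace {X K : Type*} [TopologicalSpace X]
    [TopologicalSpace K] [CompactSpace K] {f : X × K → ℝ} (hf : UpperSemicontinuous f) :
    UpperSemicontinuous fun x => ⨆ k, f (x, k) := by
  intro x y hy
  rcases isEmpty_or_nonempty K with _ | _
  · simp only [Real.iSup_of_isEmpty] at hy ⊢
    exact .of_forall fun _ => hy
  obtain ⟨z, hxz, hzy⟩ := exists_between hy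
  have hbdd : BddAbove (range fun k => f (x, k)) := by
    have h := ((hf.comp (Continuous.prodMk_right x)).upperSemicontinuousOn univ)
      |>.bddAbove_of_isCompact isCompact_univ
    rwa [image_univ] at h
  have hnear : ∀ k ∈ (univ : Set K), ∀ᶠ q : X × K in 𝓝 (x, k), f (q.1, q.2) < z :=
    fun k _ => hf (x, k) z ((le_ciSup hbdd k).trans_lt hxz)
  filter_upwards [isCompact_univ.eventually_forall_of_forall_eventually
    (P := fun x' k => f (x', k) < z) hnear] with x' hx'
  exact (ciSup_le fun k => (hx' k trivial).le).trans_lt hzy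

theorem Continuous.upperSemicontinuous_div {Z : Type*} [TopologicalSpace Z] {g h : Z → ℝ}
    (hg : Continuous g) (hg0 : ∀ z, 0 ≤ g z) (hh : LowerSemicontinuous h) (hh0 : ∀ z, 0 < h z) :
    UpperSemicontinuous fun z => g z / h z := by
  intro z y hy
  have hy0 : 0 < y := (div_nonneg (hg0 z) (hh0 z).le).trans_lt hy
  obtain ⟨c, hgc, hch⟩ := exists_between ((div_lt_iff₀ (hh0 z)).1 hy)
  filter_upwards [(hg.tendsto z).eventually_lt_const hgc,
    hh z (c / y) ((div_lt_iff₀' hy0).2 hch)] with z' hgz' hhz'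
  rw [div_lt_iff₀ (hh0 z')]
  exact hgz'.trans ((div_lt_iff₀' hy0).1 hhz')

theorem iSup_ne_zero_eq_iSup_sphere {V : Type*} [NormedAddCommGroup V] [NormedSpace ℝ V]
    {F : V → ℝ} (hF : ∀ c : ℝ, 0 < c → ∀ w, F (c • w) = F w) :
    ⨆ w : {w : V // w ≠ 0}, F w = ⨆ u : sphere (0 : V) 1, F u := by
  let normalize : {w : V // w ≠ 0} → sphere (0 : V) 1 := fun w =>
    ⟨‖(w : V)‖⁻¹ • (w : V), by simp [norm_smul, w.2]⟩
  have hsurj : Function.Surjective normalize := fun u => by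
    have hu : ‖(u : V)‖ = 1 := mem_sphere_zero_iff_norm.1 u.2
    exact ⟨⟨u, by simp [← norm_ne_zero_iff, hu]⟩, Subtype.ext (by simp [normalize, hu])⟩
  exact hsurj.iSup_congr normalize fun w => hF _ (by simp [w.2]) _

theorem stmt_2_general {X : Type*} [TopologicalSpace X] {V : Type*} [NormedAddCommGroup V]
    [InnerProductSpace ℝ V] [FiniteDimensional ℝ V] (α : ℝ) (hα : 1 ≤ α)
    (φ : X → V → ℝ)
    (hhom : ∀ x (c : ℝ) (v : V), φ x (c • v) = |c| * φ x v)
    (hlow : ∀ x (v : V), (1 / α) * ‖v‖ ≤ φ x v)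
    (hlsc : LowerSemicontinuous fun p : X × V => φ p.1 p.2) :
    UpperSemicontinuous fun p : X × V =>
      ⨆ w : {w : V // w ≠ 0}, |(inner ℝ p.2 w.1 : ℝ)| / φ p.1 w.1 := by
  have hφpos : ∀ x, ∀ u ∈ sphere (0 : V) 1, 0 < φ x u := fun x u hu => by
    have hα0 : 0 < 1 / α := by positivity
    have h := hlow x u
    rw [mem_sphere_zero_iff_norm.1 hu, mul_one] at h
    exact hα0.trans_le h
  have hsphere : ∀ p : X × V, ⨆ w : {w : V // w ≠ 0}, |(inner ℝ p.2 w.1 : ℝ)| / φ p.1 w.1 =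
      ⨆ u : sphere (0 : V) 1, |(inner ℝ p.2 u.1 : ℝ)| / φ p.1 u.1 := fun p =>
    iSup_ne_zero_eq_iSup_sphere (F := fun w => |(inner ℝ p.2 w : ℝ)| / φ p.1 w) fun c hc w => by
      rw [real_inner_smul_right, hhom, abs_mul, abs_of_pos hc, mul_div_mul_left _ _ hc.ne']
  simp only [hsphere]
  exact UpperSemicontinuous.iSup_of_compactSpace
    (f := fun q : (X × V) × sphere (0 : V) 1 => |(inner ℝ q.1.2 q.2.1 : ℝ)| / φ q.1.1 q.2.1)
    (Continuous.upperSemicontinuous_div (by fun_prop) (fun _ => abs_nonneg _)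
      (hlsc.comp (g := fun q : (X × V) × sphere (0 : V) 1 => (q.1.1, q.2.1)) (by fun_prop))
      fun q => hφpos _ _ q.2.2)

theorem stmt_2 {X : Type*} [TopologicalSpace X] {V : Type*} [NormedAddCommGroup V]
    [InnerProductSpace ℝ V] [FiniteDimensional ℝ V] (α : ℝ) (hα : 1 ≤ α)
    (φ : X → V → ℝ)
    (hhom : ∀ x (c : ℝ) (v : V), φ x (c • v) = |c| * φ x v)
    (hsub : ∀ x (v w : V), φ x (v + w) ≤ φ x v + φ x w)
    (hlow : ∀ x (v : V), (1 / α) * ‖v‖ ≤ φ x v) (hup : ∀ x (v : V), φ x v ≤ α * ‖v‖)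
    (hlsc : LowerSemicontinuous fun p : X × V => φ p.1 p.2) :
    UpperSemicontinuous fun p : X × V =>
      ⨆ w : {w : V // w ≠ 0}, |(inner ℝ p.2 w.1 : ℝ)| / φ p.1 w.1 :=
  stmt_2_general α hα φ hhom hlow hlsc
end

section
/- Let X be a topological space, V a finite-dimensional real inner product space, and φ : X × V → [0,∞) such that φ(x,·) is a norm with (1/α)‖v‖ ≤ φ(x,v) ≤ α‖v‖ for each x. If φ is upper semicontinuous on X × V, then the dual metric φ*(x,v) := sup { |⟨v,w⟩| / φ(x,w) : w ≠ 0 } is lower semicontinuous on X × V. -/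
/-! Each function `(x, v) ↦ |⟪v, w⟫| / φ(x, w)` is lower semicontinuous, being a continuous
nonnegative numerator over a positive upper semicontinuous denominator, and the family is
bounded by `α ‖v‖`; a bounded supremum of lower semicontinuous functions is lower
semicontinuous. -/

open Filter

theorem UpperSemicontinuous.comp_continuous {α β γ : Type*} [TopologicalSpace α]
    [TopologicalSpace β] [Preorder γ] {f : β → γ} {g : α → β} (hf : UpperSemicontinuous f)
    (hg : Continuous g) : UpperSemicontinuous (f ∘ g) :=
  fun x y hy => hg.continuousAt.eventually (hf (g x) y hy)

theorem LowerSemicontinuous.div_of_upperSemicontinuous {α : Type*} [TopologicalSpace α]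
    {f g : α → ℝ} (hf : LowerSemicontinuous f) (hf₀ : ∀ x, 0 ≤ f x)
    (hg : UpperSemicontinuous g) (hg₀ : ∀ x, 0 < g x) :
    LowerSemicontinuous fun x => f x / g x := by
  intro x y hy
  rcases lt_or_ge y 0 with hy₀ | hy₀
  · exact Eventually.of_forall fun z => hy₀.trans_le (div_nonneg (hf₀ z) (hg₀ z).le)
  have hyg : y * g x < f x := (lt_div_iff₀ (hg₀ x)).mp hy
  obtain ⟨s, hys, hgs⟩ : ∃ s, y * s < f x ∧ g x < s :=
    (((continuous_const_mul y).tendsto (g x)).eventually (gt_mem_nhds hyg)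
      |>.filter_mono nhdsWithin_le_nhds
      |>.and (self_mem_nhdsWithin (s := Set.Ioi (g x)))).exists
  filter_upwards [hg x s hgs, hf x (y * s) hys] with z hgz hfz
  rw [gt_iff_lt, lt_div_iff₀ (hg₀ z)]
  calc y * g z ≤ y * s := mul_le_mul_of_nonneg_left hgz.le hy₀
    _ < f z := hfz

theorem abs_real_inner_div_le_of_mul_norm_le {V : Type*} [NormedAddCommGroup V]
    [InnerProductSpace ℝ V] {c t : ℝ} (hc : 0 < c) {v w : V} (hw : w ≠ 0) (ht : c * ‖w‖ ≤ t) :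
    |(inner ℝ v w : ℝ)| / t ≤ ‖v‖ / c := by
  have ht₀ : 0 < t := (mul_pos hc (norm_pos_iff.2 hw)).trans_le ht
  rw [div_le_div_iff₀ ht₀ hc]
  calc |(inner ℝ v w : ℝ)| * c ≤ ‖v‖ * ‖w‖ * c := by gcongr; exact abs_real_inner_le_norm v w
    _ = ‖v‖ * (c * ‖w‖) := by ring
    _ ≤ ‖v‖ * t := by gcongr

theorem stmt_3_general {X : Type*} [TopologicalSpace X] {V : Type*} [NormedAddCommGroup V]
    [InnerProductSpace ℝ V] (α : ℝ) (hα : 1 ≤ α)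
    (φ : X → V → ℝ)
    (hlow : ∀ x (v : V), (1 / α) * ‖v‖ ≤ φ x v)
    (husc : UpperSemicontinuous fun p : X × V => φ p.1 p.2) :
    LowerSemicontinuous fun p : X × V =>
      ⨆ w : {w : V // w ≠ 0}, |(inner ℝ p.2 w.1 : ℝ)| / φ p.1 w.1 := by
  have hc : 0 < 1 / α := one_div_pos.2 (by linarith)
  have hφ₀ : ∀ x w, w ≠ 0 → 0 < φ x w := fun x w hw =>
    (mul_pos hc (norm_pos_iff.2 hw)).trans_le (hlow x w)
  refine lowerSemicontinuous_ciSup (fun p => ⟨‖p.2‖ / (1 / α), ?_⟩) fun w => ?_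
  · rintro _ ⟨w, rfl⟩
    exact abs_real_inner_div_le_of_mul_norm_le hc w.2 (hlow _ _)
  · have hnum : Continuous fun p : X × V => |(inner ℝ p.2 w.1 : ℝ)| :=
      (continuous_snd.inner continuous_const).abs
    have hden : UpperSemicontinuous fun p : X × V => φ p.1 w.1 :=
      husc.comp_continuous (continuous_fst.prodMk continuous_const)
    exact hnum.lowerSemicontinuous.div_of_upperSemicontinuous (fun _ => abs_nonneg _) hden
      fun p => hφ₀ p.1 w.1 w.2

theorem stmt_3 {X : Type*} [TopologicalSpace X] {V : Type*} [NormedAddCommGroup V]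
    [InnerProductSpace ℝ V] [FiniteDimensional ℝ V] (α : ℝ) (hα : 1 ≤ α)
    (φ : X → V → ℝ)
    (hhom : ∀ x (c : ℝ) (v : V), φ x (c • v) = |c| * φ x v)
    (hsub : ∀ x (v w : V), φ x (v + w) ≤ φ x v + φ x w)
    (hlow : ∀ x (v : V), (1 / α) * ‖v‖ ≤ φ x v) (hup : ∀ x (v : V), φ x v ≤ α * ‖v‖)
    (husc : UpperSemicontinuous fun p : X × V => φ p.1 p.2) :
    LowerSemicontinuous fun p : X × V =>
      ⨆ w : {w : V // w ≠ 0}, |(inner ℝ p.2 w.1 : ℝ)| / φ p.1 w.1 :=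
  stmt_3_general α hα φ hlow husc
end

section
/- Let (M,d) be a metric space, γ : [0,1] → M a Lipschitz curve, and suppose the metric derivative |γ̇|(t) := lim_{s→0} d(γ(t+s),γ(t))/|s| exists for almost every t. Then the length of γ, defined as L_d(γ) := sup over partitions 0 ≤ t_1 < ... < t_k ≤ 1 of Σ d(γ(t_{i+1}),γ(t_i)), equals ∫₀¹ |γ̇|(t) dt. -/
open MeasureTheory Filter Topology

open Set
open scoped ENNReal NNReal

/-!
After extending `γ` to a Lipschitz curve on all of `ℝ` (compose with the projection onto
`[a, b]`), both inequalities come from comparing the metric derivative with a real derivative.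
The variation function `V t = var(γ, [a, t])` is Lipschitz and satisfies
`d(γ x, γ y) ≤ V y - V x`, so `|γ̇| ≤ V'` a.e., and `∫ V' = V b` by the fundamental theorem of
calculus for absolutely continuous functions. Conversely `g = d(γ ·, γ x)` is Lipschitz with
`|g'| ≤ |γ̇|`, so `d(γ x, γ y) ≤ ∫ₓʸ |γ̇|`, and summing over a partition bounds the variation.
-/

/-- `w` is the metric derivative `|ḟ|(t)`. -/
def HasMetricDerivAt {M : Type*} [PseudoMetricSpace M] (f : ℝ → M) (w t : ℝ) : Prop :=
  Tendsto (fun s => dist (f (t + s)) (f t) / |s|) (𝓝[≠] 0) (𝓝 w)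

section Variation

variable {α E : Type*} [LinearOrder α]

theorem eVariationOn_le_eVariationOn_of_edist_le [PseudoEMetricSpace E] {F : Type*}
    [PseudoEMetricSpace F] {f : α → E} {g : α → F} {s : Set α}
    (h : ∀ x ∈ s, ∀ y ∈ s, x ≤ y → edist (f x) (f y) ≤ edist (g x) (g y)) :
    eVariationOn f s ≤ eVariationOn g s := by
  refine iSup_le fun ⟨n, u, hu, us⟩ => ?_
  calc ∑ i ∈ Finset.range n, edist (f (u (i + 1))) (f (u i))
      ≤ ∑ i ∈ Finset.range n, edist (g (u (i + 1))) (g (u i)) :=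
        Finset.sum_le_sum fun i _ => by
          rw [edist_comm, edist_comm (g _)]
          exact h _ (us i) _ (us _) (hu i.le_succ)
    _ ≤ eVariationOn g s := eVariationOn.sum_le hu us

theorem eVariationOn_inter_Icc_le_of_dist_le_sub [PseudoMetricSpace E] {f : α → E} {g : α → ℝ}
    {s : Set α} (h : ∀ x ∈ s, ∀ y ∈ s, x ≤ y → dist (f x) (f y) ≤ g y - g x)
    {a b : α} (ha : a ∈ s) (hb : b ∈ s) :
    eVariationOn f (s ∩ Icc a b) ≤ ENNReal.ofReal (g b - g a) := by
  have hg : MonotoneOn g s := fun x hx y hy hxy =>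
    sub_nonneg.1 (dist_nonneg.trans (h x hx y hy hxy))
  rw [← hg.eVariationOn_eq ha hb]
  refine eVariationOn_le_eVariationOn_of_edist_le fun x hx y hy hxy => ?_
  rw [edist_dist, edist_dist, Real.dist_eq, abs_sub_comm,
    abs_of_nonneg (sub_nonneg.2 (hg hx.1 hy.1 hxy))]
  exact ENNReal.ofReal_le_ofReal (h x hx.1 y hy.1 hxy)

theorem dist_le_variationOnFromTo_sub [PseudoMetricSpace E] {f : α → E} {s : Set α}
    (hf : LocallyBoundedVariationOn f s) {a x y : α} (ha : a ∈ s) (hx : x ∈ s) (hy : y ∈ s)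
    (hxy : x ≤ y) :
    dist (f x) (f y) ≤ variationOnFromTo f s a y - variationOnFromTo f s a x := by
  rw [variationOnFromTo.sub_right hf ha hy hx, variationOnFromTo.eq_of_le f s hxy]
  exact (hf x y hx hy).dist_le ⟨hx, le_rfl, hxy⟩ ⟨hy, hxy, le_rfl⟩

theorem LipschitzOnWith.eVariationOn_inter_Icc_le [PseudoEMetricSpace E] {f : ℝ → E} {K : ℝ≥0}
    {s : Set ℝ} (hf : LipschitzOnWith K f s) (a b : ℝ) :
    eVariationOn f (s ∩ Icc a b) ≤ K * ENNReal.ofReal (b - a) :=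
  calc eVariationOn f (s ∩ Icc a b) = eVariationOn (f ∘ id) (s ∩ Icc a b) := rfl
    _ ≤ K * eVariationOn id (s ∩ Icc a b) :=
      hf.comp_eVariationOn_le ((mapsTo_id _).mono_left inter_subset_left)
    _ ≤ K * ENNReal.ofReal (b - a) := by
      grw [eVariationOn.mono id inter_subset_right, eVariationOn_id_Icc]

theorem LipschitzOnWith.variationOnFromTo [PseudoEMetricSpace E] {f : ℝ → E} {K : ℝ≥0}
    {s : Set ℝ} (hf : LipschitzOnWith K f s) {a : ℝ} (ha : a ∈ s) :
    LipschitzOnWith K (variationOnFromTo f s a) s := by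
  refine LipschitzOnWith.of_dist_le_mul fun x hx y hy => ?_
  wlog hxy : y ≤ x generalizing x y
  · rw [dist_comm, dist_comm x]
    exact this y hy x hx (le_of_not_ge hxy)
  rw [Real.dist_eq, Real.dist_eq, variationOnFromTo.sub_right hf.locallyBoundedVariationOn ha hx hy,
    variationOnFromTo.eq_of_le _ _ hxy, abs_of_nonneg (sub_nonneg.2 hxy), ENNReal.abs_toReal]
  refine ENNReal.toReal_le_of_le_ofReal (by positivity) ?_
  rw [ENNReal.ofReal_mul K.coe_nonneg, ENNReal.ofReal_coe_nnreal]
  exact hf.eVariationOn_inter_Icc_le y x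

end Variation

section MetricDeriv

variable {M : Type*} [PseudoMetricSpace M] {f : ℝ → M} {w t : ℝ}

theorem HasMetricDerivAt.nonneg (hf : HasMetricDerivAt f w t) : 0 ≤ w :=
  ge_of_tendsto' hf fun s => by positivity

theorem HasMetricDerivAt.le_of_lipschitzWith {K : ℝ≥0} (hf : HasMetricDerivAt f w t)
    (hK : LipschitzWith K f) : w ≤ K :=
  le_of_tendsto' hf fun s => div_le_of_le_mul₀ (abs_nonneg _) K.coe_nonneg <| by
    simpa [Real.dist_eq] using hK.dist_le_mul (t + s) t

theorem HasMetricDerivAt.congr_of_eventuallyEq {g : ℝ → M} (hf : HasMetricDerivAt f w t)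
    (h : f =ᶠ[𝓝 t] g) : HasMetricDerivAt g w t := by
  have h' : ∀ᶠ s in 𝓝 (0 : ℝ), f (t + s) = g (t + s) :=
    ((continuous_const.add continuous_id).tendsto' 0 t (add_zero t)).eventually h
  refine hf.congr' (eventually_nhdsWithin_of_eventually_nhds (h'.mono fun s hs => ?_))
  rw [hs, h.self_of_nhds]

theorem HasMetricDerivAt.le_of_hasDerivAt {g : ℝ → ℝ} {g' : ℝ} (hf : HasMetricDerivAt f w t)
    (hg : HasDerivAt g g' t) (hle : ∀ x y, x ≤ y → dist (f x) (f y) ≤ g y - g x) : w ≤ g' := by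
  refine le_of_tendsto_of_tendsto hf (hasDerivAt_iff_tendsto_slope_zero.1 hg) ?_
  filter_upwards [self_mem_nhdsWithin] with s (hs : s ≠ 0)
  rw [smul_eq_mul, inv_mul_eq_div]
  rcases hs.lt_or_gt with hs | hs
  · rw [abs_of_neg hs, ← neg_div_neg_eq (g _ - _), neg_sub]
    exact div_le_div_of_nonneg_right (hle _ _ (by linarith)) (by linarith)
  · rw [abs_of_pos hs, dist_comm]
    exact div_le_div_of_nonneg_right (hle _ _ (by linarith)) hs.le

theorem HasMetricDerivAt.abs_le_of_hasDerivAt {g : ℝ → ℝ} {g' : ℝ} (hf : HasMetricDerivAt f w t)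
    (hg : HasDerivAt g g' t) (hle : ∀ x, |g x - g t| ≤ dist (f x) (f t)) : |g'| ≤ w := by
  refine le_of_tendsto_of_tendsto (hasDerivAt_iff_tendsto_slope_zero.1 hg).abs hf
    (Eventually.of_forall fun s => ?_)
  dsimp only
  rw [smul_eq_mul, abs_mul, abs_inv, inv_mul_eq_div]
  exact div_le_div_of_nonneg_right (hle (t + s)) (abs_nonneg s)

theorem Continuous.aemeasurable_of_ae_hasMetricDerivAt {μ : Measure ℝ} {v : ℝ → ℝ}
    (hf : Continuous f) (hv : ∀ᵐ t ∂μ, HasMetricDerivAt f (v t) t) : AEMeasurable v μ := by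
  have hseq : Tendsto (fun n : ℕ => 1 / ((n : ℝ) + 1)) atTop (𝓝[≠] 0) :=
    tendsto_nhdsWithin_of_tendsto_nhds_of_eventually_within _
      tendsto_one_div_add_atTop_nhds_zero_nat (Eventually.of_forall fun n => by
        simp only [mem_compl_iff, mem_singleton_iff]; positivity)
  refine aemeasurable_of_tendsto_metrizable_ae'
    (f := fun n t => dist (f (t + 1 / ((n : ℝ) + 1))) (f t) / |1 / ((n : ℝ) + 1)|)
    (fun n => Continuous.aemeasurable (by fun_prop)) ?_
  filter_upwards [hv] with t ht using ht.comp hseq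

end MetricDeriv

section LipschitzCurve

variable {M : Type*} [PseudoMetricSpace M] {γ : ℝ → M} {K : ℝ≥0} {v : ℝ → ℝ} {a b : ℝ}

theorem LipschitzWith.integrableOn_of_ae_hasMetricDerivAt (hγ : LipschitzWith K γ)
    (hv : ∀ᵐ t ∂volume.restrict (Icc a b), HasMetricDerivAt γ (v t) t) :
    IntegrableOn v (Icc a b) := by
  refine Integrable.mono' (integrable_const (K : ℝ))
    (hγ.continuous.aemeasurable_of_ae_hasMetricDerivAt hv).aestronglyMeasurable ?_
  filter_upwards [hv] with t ht
  rw [Real.norm_eq_abs, abs_of_nonneg ht.nonneg]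
  exact ht.le_of_lipschitzWith hγ

theorem LipschitzWith.dist_le_integral_of_ae_hasMetricDerivAt (hγ : LipschitzWith K γ)
    (hab : a ≤ b) (hv : ∀ᵐ t ∂volume.restrict (Icc a b), HasMetricDerivAt γ (v t) t) :
    dist (γ a) (γ b) ≤ ∫ t in a..b, v t := by
  set g : ℝ → ℝ := fun x => dist (γ x) (γ a)
  have hg : LipschitzWith K g := one_mul K ▸ (LipschitzWith.dist_left (γ a)).comp hγ
  have hgac := hg.lipschitzOnWith (s := uIcc a b) |>.absolutelyContinuousOnInterval
  have hderiv : deriv g ≤ᵐ[volume.restrict (Icc a b)] v := by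
    filter_upwards [hv, ae_restrict_of_ae hg.ae_differentiableAt_real] with t ht hgt
    exact (le_abs_self _).trans
      (ht.abs_le_of_hasDerivAt hgt.hasDerivAt fun x => abs_dist_sub_le _ _ _)
  calc dist (γ a) (γ b) = ∫ t in a..b, deriv g t := by
        rw [hgac.integral_deriv_eq_sub]
        simp [g, dist_comm]
    _ ≤ ∫ t in a..b, v t :=
      intervalIntegral.integral_mono_ae_restrict hab hgac.intervalIntegrable_deriv
        ((intervalIntegrable_iff_integrableOn_Icc_of_le hab).2
          (hγ.integrableOn_of_ae_hasMetricDerivAt hv)) hderiv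

theorem LipschitzWith.eVariationOn_le_integral (hγ : LipschitzWith K γ) (hab : a ≤ b)
    (hv : ∀ᵐ t ∂volume.restrict (Icc a b), HasMetricDerivAt γ (v t) t) :
    eVariationOn γ (Icc a b) ≤ ENNReal.ofReal (∫ t in a..b, v t) := by
  have hvi : ∀ x ∈ Icc a b, IntervalIntegrable v volume a x := fun x hx =>
    ((intervalIntegrable_iff_integrableOn_Icc_of_le hx.1).2
      ((hγ.integrableOn_of_ae_hasMetricDerivAt hv).mono_set (Icc_subset_Icc le_rfl hx.2)))
  have hdist : ∀ x ∈ Icc a b, ∀ y ∈ Icc a b, x ≤ y →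
      dist (γ x) (γ y) ≤ (∫ t in a..y, v t) - ∫ t in a..x, v t := by
    intro x hx y hy hxy
    rw [intervalIntegral.integral_interval_sub_left (hvi y hy) (hvi x hx)]
    exact hγ.dist_le_integral_of_ae_hasMetricDerivAt hxy
      (ae_restrict_of_ae_restrict_of_subset (Icc_subset_Icc hx.1 hy.2) hv)
  simpa using eVariationOn_inter_Icc_le_of_dist_le_sub hdist (left_mem_Icc.2 hab)
    (right_mem_Icc.2 hab)

theorem LipschitzWith.integral_le_eVariationOn_toReal (hγ : LipschitzWith K γ) (hab : a ≤ b)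
    (hv : ∀ᵐ t ∂volume.restrict (Icc a b), HasMetricDerivAt γ (v t) t) :
    ∫ t in a..b, v t ≤ (eVariationOn γ (Icc a b)).toReal := by
  set V := variationOnFromTo γ univ a
  have hV : LipschitzWith K V :=
    lipschitzOnWith_univ.1 (hγ.lipschitzOnWith.variationOnFromTo (mem_univ a))
  have hVac := hV.lipschitzOnWith (s := uIcc a b) |>.absolutelyContinuousOnInterval
  have hle : v ≤ᵐ[volume.restrict (Icc a b)] deriv V := by
    filter_upwards [hv, ae_restrict_of_ae hV.ae_differentiableAt_real] with t ht hVt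
    exact ht.le_of_hasDerivAt hVt.hasDerivAt fun x y hxy =>
      dist_le_variationOnFromTo_sub (hγ.locallyBoundedVariationOn univ) (mem_univ a)
        (mem_univ x) (mem_univ y) hxy
  calc ∫ t in a..b, v t ≤ ∫ t in a..b, deriv V t :=
        intervalIntegral.integral_mono_ae_restrict hab
          ((intervalIntegrable_iff_integrableOn_Icc_of_le hab).2
            (hγ.integrableOn_of_ae_hasMetricDerivAt hv)) hVac.intervalIntegrable_deriv hle
    _ = V b - V a := hVac.integral_deriv_eq_sub
    _ = (eVariationOn γ (Icc a b)).toReal := by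
      rw [show V a = 0 from variationOnFromTo.self _ _ _, sub_zero,
        show V b = _ from variationOnFromTo.eq_of_le _ _ hab, univ_inter]

theorem LipschitzWith.eVariationOn_toReal_eq_integral (hγ : LipschitzWith K γ) (hab : a ≤ b)
    (hv : ∀ᵐ t ∂volume.restrict (Icc a b), HasMetricDerivAt γ (v t) t) :
    (eVariationOn γ (Icc a b)).toReal = ∫ t in a..b, v t :=
  le_antisymm
    (ENNReal.toReal_le_of_le_ofReal
      (intervalIntegral.integral_nonneg_of_ae_restrict hab (hv.mono fun _ ht => ht.nonneg))
      (hγ.eVariationOn_le_integral hab hv))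
    (hγ.integral_le_eVariationOn_toReal hab hv)

theorem LipschitzOnWith.eVariationOn_toReal_eq_integral (hγ : LipschitzOnWith K γ (Icc a b))
    (hab : a ≤ b) (hv : ∀ᵐ t ∂volume.restrict (Icc a b), HasMetricDerivAt γ (v t) t) :
    (eVariationOn γ (Icc a b)).toReal = ∫ t in a..b, v t := by
  set γ' := IccExtend hab ((Icc a b).domRestrict γ)
  have hγ' : LipschitzWith K γ' := mul_one K ▸ hγ.to_restrict.comp (LipschitzWith.projIcc hab)
  have heq : EqOn γ' γ (Icc a b) := fun t ht => IccExtend_of_mem hab _ ht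
  have hv' : ∀ᵐ t ∂volume.restrict (Icc a b), HasMetricDerivAt γ' (v t) t := by
    rw [← Measure.restrict_congr_set Ioo_ae_eq_Icc] at hv ⊢
    filter_upwards [hv, ae_restrict_mem measurableSet_Ioo] with t ht htI
    exact ht.congr_of_eventuallyEq (heq.symm.eventuallyEq_of_mem (Icc_mem_nhds htI.1 htI.2))
  rw [← eVariationOn.eq_of_eqOn heq, hγ'.eVariationOn_toReal_eq_integral hab hv']

end LipschitzCurve

theorem stmt_7 {M : Type*} [MetricSpace M] (γ : ℝ → M) (K : NNReal)
    (hγ : LipschitzOnWith K γ (Set.Icc 0 1)) (v : ℝ → ℝ)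
    (hv : ∀ᵐ t ∂(volume.restrict (Set.Icc (0:ℝ) 1)),
      Tendsto (fun s => dist (γ (t + s)) (γ t) / |s|) (𝓝[≠] (0:ℝ)) (𝓝 (v t))) :
    (eVariationOn γ (Set.Icc 0 1)).toReal = ∫ t in Set.Icc (0:ℝ) 1, v t := by
  rw [hγ.eVariationOn_toReal_eq_integral zero_le_one hv,
    intervalIntegral.integral_of_le zero_le_one, integral_Icc_eq_integral_Ioc]
end

section
/- Let (M,d) be a metric space, (d_i) an increasing sequence of distances on M with d_i ↗ d pointwise, and f : M → ℝ an L-Lipschitz function with respect to d. Fix a countable dense subset (x_j) of (M,d) and define h_n(x) := max_{1 ≤ j ≤ n} (−L·d(x,x_j) + f(x_j)) − 1/n. Then each h_n is L-Lipschitz with respect to d, h_n(x) < h_{n+1}(x) < f(x) for all x, and h_n(x) → f(x) for every x ∈ M. -/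
open MeasureTheory Filter Topology

theorem stmt_13 {M : Type*} [MetricSpace M]
    (di : ℕ → M → M → ℝ)
    (hdi0 : ∀ i x, di i x x = 0) (hdipos : ∀ i x y, x ≠ y → 0 < di i x y)
    (hdisymm : ∀ i x y, di i x y = di i y x)
    (hditri : ∀ i x y z, di i x z ≤ di i x y + di i y z)
    (hdimono : ∀ i x y, di i x y ≤ di (i + 1) x y)
    (hdilim : ∀ x y : M, Tendsto (fun i => di i x y) atTop (𝓝 (dist x y)))
    (x : ℕ → M) (hdense : DenseRange x)
    (L : ℝ) (hL : 0 ≤ L) (f : M → ℝ)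
    (hf : ∀ a b : M, |f a - f b| ≤ L * dist a b) :
    letI h : ℕ → M → ℝ := fun n y =>
      (⨆ j : Fin (n + 1), (-L * dist y (x j) + f (x j))) - 1 / (n + 1)
    ((∀ n, ∀ a b : M, |h n a - h n b| ≤ L * dist a b) ∧
      (∀ n y, h n y < h (n + 1) y) ∧ (∀ n y, h n y < f y) ∧
      ∀ y, Tendsto (fun n => h n y) atTop (𝓝 (f y))) := by
  show (∀ n, ∀ a b : M,
      |((⨆ j : Fin (n + 1), (-L * dist a (x j) + f (x j))) - 1 / (n + 1)) -
        ((⨆ j : Fin (n + 1), (-L * dist b (x j) + f (x j))) - 1 / (n + 1))| ≤ L * dist a b) ∧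
    (∀ n (y : M),
      ((⨆ j : Fin (n + 1), (-L * dist y (x j) + f (x j))) - 1 / (n + 1)) <
        ((⨆ j : Fin (n + 1 + 1), (-L * dist y (x j) + f (x j))) - 1 / ((n + 1 : ℕ) + 1))) ∧
    (∀ n (y : M),
      ((⨆ j : Fin (n + 1), (-L * dist y (x j) + f (x j))) - 1 / (n + 1)) < f y) ∧
    ∀ y : M, Tendsto
      (fun n => (⨆ j : Fin (n + 1), (-L * dist y (x j) + f (x j))) - 1 / (n + 1))
      atTop (𝓝 (f y))
  set g : ℕ → M → ℝ := fun n y => ⨆ j : Fin (n + 1), (-L * dist y (x j) + f (x j)) with hg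
  have hbdd : ∀ n y, BddAbove (Set.range fun j : Fin (n + 1) => (-L * dist y (x j) + f (x j))) :=
    fun n y => (Set.finite_range _).bddAbove
  have key : ∀ n (a b : M), g n a ≤ g n b + L * dist a b := by
    intro n a b
    apply ciSup_le
    intro j
    have h1 : -L * dist a (x j) + f (x j) ≤ (-L * dist b (x j) + f (x j)) + L * dist a b := by
      have ht := dist_triangle b a (x j)
      have hc : dist a b = dist b a := dist_comm a b
      nlinarith
    refine h1.trans ?_
    have h2 : -L * dist b (x j) + f (x j) ≤ g n b := le_ciSup (hbdd n b) j
    linarith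
  have hgle : ∀ n y, g n y ≤ f y := by
    intro n y
    apply ciSup_le
    intro j
    have h1 := (abs_le.1 (hf (x j) y)).2
    rw [dist_comm (x j) y] at h1
    linarith
  have hgmono : ∀ n y, g n y ≤ g (n + 1) y := by
    intro n y
    apply ciSup_le
    intro j
    exact le_ciSup (hbdd (n + 1) y) (Fin.castSucc j)
  refine ⟨?_, ?_, ?_, ?_⟩
  · intro n a b
    have h1 := key n a b
    have h2 := key n b a
    have hc : dist b a = dist a b := dist_comm b a
    rw [abs_le]
    constructor <;> nlinarith
  · intro n y
    have h1 := hgmono n y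
    have h2 : (1 : ℝ) / ((n : ℝ) + 1 + 1) < 1 / ((n : ℝ) + 1) := by
      apply one_div_lt_one_div_of_lt
      · positivity
      · linarith
    push_cast
    linarith
  · intro n y
    have h1 := hgle n y
    have h2 : (0 : ℝ) < 1 / ((n : ℝ) + 1) := by positivity
    linarith
  · intro y
    rw [tendsto_order]
    constructor
    · intro a ha
      set ε := f y - a with hε
      have hεpos : 0 < ε := by simp only [hε]; linarith
      obtain ⟨j, hj⟩ := hdense.exists_dist_lt y (show 0 < ε / (4 * (L + 1)) by positivity)
      have hterm : f y - ε / 2 < -L * dist y (x j) + f (x j) := by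
        have h1 := (abs_le.1 (hf (x j) y)).1
        have hc : dist (x j) y = dist y (x j) := dist_comm _ _
        have hd0 : 0 ≤ dist y (x j) := dist_nonneg
        have hLd : L * dist y (x j) ≤ (L + 1) * (ε / (4 * (L + 1))) := by
          have h3 : L * dist y (x j) ≤ (L + 1) * dist y (x j) := by nlinarith
          refine h3.trans ?_
          exact mul_le_mul_of_nonneg_left hj.le (by linarith)
        have hs : (L + 1) * (ε / (4 * (L + 1))) = ε / 4 := by
          field_simp
        nlinarith
      have htend : Tendsto (fun n : ℕ => (1 : ℝ) / (n + 1)) atTop (𝓝 0) :=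
        tendsto_one_div_add_atTop_nhds_zero_nat
      have hev : ∀ᶠ n : ℕ in atTop, (1 : ℝ) / (n + 1) < ε / 2 :=
        htend.eventually (gt_mem_nhds (by positivity))
      filter_upwards [eventually_ge_atTop j, hev] with n hn1 hn2
      have hjn : -L * dist y (x j) + f (x j) ≤ g n y := by
        exact le_ciSup (hbdd n y) (⟨j, by omega⟩ : Fin (n + 1))
      have hae : a = f y - ε := by simp [hε]
      rw [hae]
      linarith
    · intro b hb
      filter_upwards with n
      have h1 := hgle n y
      have h2 : (0 : ℝ) < 1 / ((n : ℝ) + 1) := by positivity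
      linarith
end

section
/- Let (M,d) be a metric space, K ⊆ M × M compact, and (d_n) a sequence of distances on M converging to d uniformly on K. Suppose γ_n → γ uniformly on [0,1] with (γ_n(s), γ_n(t)) ∈ K for all s,t ∈ [0,1] and all large n, where d is continuous on M × M. Then for every partition 0 ≤ t_1 < ... < t_k ≤ 1, Σᵢ d_n(γ_n(t_i), γ_n(t_{i+1})) → Σᵢ d(γ(t_i), γ(t_{i+1})), and consequently the length functionals satisfy the Γ-liminf inequality L_d(γ) ≤ liminf_n L_{d_n}(γ_n). -/
open MeasureTheory Filter Topology

theorem stmt_18 {M : Type*} [MetricSpace M] (K : Set (M × M)) (hK : IsCompact K)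
    (dn : ℕ → M → M → ℝ)
    (hn0 : ∀ n x, dn n x x = 0) (hnpos : ∀ n x y, x ≠ y → 0 < dn n x y)
    (hnsymm : ∀ n x y, dn n x y = dn n y x)
    (hntri : ∀ n x y z, dn n x z ≤ dn n x y + dn n y z)
    (hconv : TendstoUniformlyOn (fun n (p : M × M) => dn n p.1 p.2)
      (fun p => dist p.1 p.2) atTop K)
    (γn : ℕ → ℝ → M) (γ : ℝ → M)
    (hγconv : TendstoUniformlyOn (fun n t => γn n t) γ atTop (Set.Icc 0 1))
    (hpairs : ∃ N : ℕ, ∀ n ≥ N, ∀ s ∈ Set.Icc (0:ℝ) 1, ∀ t ∈ Set.Icc (0:ℝ) 1,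
      (γn n s, γn n t) ∈ K)
    (hγpairs : ∀ s ∈ Set.Icc (0:ℝ) 1, ∀ t ∈ Set.Icc (0:ℝ) 1, (γ s, γ t) ∈ K) :
    (∀ (k : ℕ) (t : Fin (k + 1) → ℝ), StrictMono t →
      (∀ i, t i ∈ Set.Icc (0:ℝ) 1) →
      Tendsto (fun n => ∑ i : Fin k, dn n (γn n (t i.castSucc)) (γn n (t i.succ)))
        atTop (𝓝 (∑ i : Fin k, dist (γ (t i.castSucc)) (γ (t i.succ))))) ∧
    (⨆ p : ℕ × {u : ℕ → ℝ // Monotone u ∧ ∀ i, u i ∈ Set.Icc (0:ℝ) 1},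
        ENNReal.ofReal (∑ i ∈ Finset.range p.1,
          dist (γ (p.2.1 (i + 1))) (γ (p.2.1 i))))
      ≤ liminf (fun n =>
        ⨆ p : ℕ × {u : ℕ → ℝ // Monotone u ∧ ∀ i, u i ∈ Set.Icc (0:ℝ) 1},
          ENNReal.ofReal (∑ i ∈ Finset.range p.1,
            dn n (γn n (p.2.1 (i + 1))) (γn n (p.2.1 i)))) atTop := by
  have key : ∀ s ∈ Set.Icc (0:ℝ) 1, ∀ t ∈ Set.Icc (0:ℝ) 1,
      Tendsto (fun n => dn n (γn n s) (γn n t)) atTop (𝓝 (dist (γ s) (γ t))) := by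
    intro s hs t ht
    have h1 : Tendsto (fun n => dist (γn n s) (γn n t)) atTop (𝓝 (dist (γ s) (γ t))) :=
      (hγconv.tendsto_at hs).dist (hγconv.tendsto_at ht)
    have h2 : Tendsto (fun n => dn n (γn n s) (γn n t) - dist (γn n s) (γn n t)) atTop (𝓝 0) := by
      rw [Metric.tendsto_atTop]
      intro ε hε
      obtain ⟨N, hN⟩ := hpairs
      have h := (Metric.tendstoUniformlyOn_iff.mp hconv ε hε)
      rw [eventually_atTop] at h
      obtain ⟨N2, hN2⟩ := h
      refine ⟨max N N2, fun n hn => ?_⟩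
      have hmem := hN n (le_trans (le_max_left _ _) hn) s hs t ht
      have h3 := hN2 n (le_trans (le_max_right _ _) hn) _ hmem
      simp only [Real.dist_eq] at h3 ⊢
      rw [sub_zero, abs_sub_comm]
      exact h3
    have h4 := h2.add h1
    simpa using h4
  constructor
  · intro k t hmono hmem
    exact tendsto_finset_sum _ fun i _ => key _ (hmem _) _ (hmem _)
  · apply iSup_le
    rintro ⟨k, u, humono, humem⟩
    have htend : Tendsto (fun n => ENNReal.ofReal (∑ i ∈ Finset.range k,
        dn n (γn n (u (i+1))) (γn n (u i)))) atTop
        (𝓝 (ENNReal.ofReal (∑ i ∈ Finset.range k, dist (γ (u (i+1))) (γ (u i))))) :=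
      (ENNReal.continuous_ofReal.tendsto _).comp
        (tendsto_finset_sum _ fun i _ => key _ (humem _) _ (humem _))
    calc ENNReal.ofReal (∑ i ∈ Finset.range k, dist (γ (u (i+1))) (γ (u i)))
        = liminf (fun n => ENNReal.ofReal (∑ i ∈ Finset.range k,
            dn n (γn n (u (i+1))) (γn n (u i)))) atTop := htend.liminf_eq.symm
      _ ≤ _ := liminf_le_liminf (Eventually.of_forall fun n =>
            le_iSup (fun p : ℕ × {u : ℕ → ℝ // Monotone u ∧ ∀ i, u i ∈ Set.Icc (0:ℝ) 1} =>
              ENNReal.ofReal (∑ i ∈ Finset.range p.1,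
                dn n (γn n (p.2.1 (i + 1))) (γn n (p.2.1 i)))) ⟨k, u, humono, humem⟩)
end
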